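/- arXiv:2004.12997 — 3 statements merged into one kernel-verified Lean document; each statement's English description precedes it below -/
import Mathlib

section
/- Let X have CDF (1 − e^{−t})^M for t ≥ 0 and let G be an independent unit-rate exponential. For αs > 0, P0 > 0, α0 > 0: P(X < αs(P0·G + 1) and G < α0) = Σ_{i=0}^{M} C(M,i)(−1)^i e^{−i·αs} · (1 − e^{−(1 + i·αs·P0)·α0})/(1 + i·αs·P0). -/
open MeasureTheory ProbabilityTheory Set Real Filter Topology

/-! Conditioning on `G`, the probability is `∫₀^α0 F_X(αs (P0 g + 1)) e^{-g} dg`, where the strict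
inequality is harmless because the CDF `F_X(t) = (1 - e^{-t})^M` is continuous. Expanding
`(1 - e^{-x})^M` by the binomial theorem turns the integrand into a combination of the exponentials
`e^{-i αs} e^{-(1 + i αs P0) g}`, each integrated explicitly. -/

lemma one_sub_exp_neg_nonneg {x : ℝ} (hx : 0 ≤ x) : 0 ≤ 1 - exp (-x) :=
  sub_nonneg.2 (exp_le_one_iff.2 (neg_nonpos.2 hx))

lemma measure_Iio_eq_ofReal_cdf {μ : Measure ℝ} [IsProbabilityMeasure μ] {c : ℝ}
    (hc : ContinuousAt (cdf μ) c) : μ (Iio c) = ENNReal.ofReal (cdf μ c) := by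
  have h := (cdf μ).measure_Iio (tendsto_cdf_atBot μ) c
  rwa [measure_cdf, hc.continuousWithinAt.leftLim_eq, sub_zero] at h

lemma cdf_map_eq_of_measure_le {Ω : Type*} [MeasurableSpace Ω] {μ : Measure Ω}
    [IsProbabilityMeasure μ] {Y : Ω → ℝ} (hY : Measurable Y) {t p : ℝ} (hp : 0 ≤ p)
    (h : μ {ω | Y ω ≤ t} = ENNReal.ofReal p) : cdf (μ.map Y) t = p := by
  have : IsProbabilityMeasure (μ.map Y) := Measure.isProbabilityMeasure_map hY.aemeasurable
  rw [cdf_eq_real, measureReal_def, Measure.map_apply hY measurableSet_Iic]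
  exact (congrArg ENNReal.toReal h).trans (ENNReal.toReal_ofReal hp)

lemma map_measure_Iio_of_measure_le {Ω : Type*} [MeasurableSpace Ω] {μ : Measure Ω}
    [IsProbabilityMeasure μ] {Y : Ω → ℝ} (hY : Measurable Y) {F : ℝ → ℝ} (hF : Continuous F)
    (hF_nonneg : ∀ t, 0 ≤ t → 0 ≤ F t)
    (h : ∀ t, 0 ≤ t → μ {ω | Y ω ≤ t} = ENNReal.ofReal (F t)) {c : ℝ} (hc : 0 < c) :
    μ.map Y (Iio c) = ENNReal.ofReal (F c) := by
  have : IsProbabilityMeasure (μ.map Y) := Measure.isProbabilityMeasure_map hY.aemeasurable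
  have hcdf : ∀ t, 0 ≤ t → cdf (μ.map Y) t = F t := fun t ht ↦
    cdf_map_eq_of_measure_le hY (hF_nonneg t ht) (h t ht)
  have hcont : ContinuousAt (cdf (μ.map Y)) c :=
    hF.continuousAt.congr (eventually_gt_nhds hc |>.mono fun t ht ↦ (hcdf t ht.le).symm)
  rw [measure_Iio_eq_ofReal_cdf hcont, hcdf c hc.le]

lemma map_eq_expMeasure_of_measure_le {Ω : Type*} [MeasurableSpace Ω] {μ : Measure Ω}
    [IsProbabilityMeasure μ] {Y : Ω → ℝ} (hY : Measurable Y) {r : ℝ} (hr : 0 < r)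
    (h : ∀ t, 0 ≤ t → μ {ω | Y ω ≤ t} = ENNReal.ofReal (1 - exp (-(r * t)))) :
    μ.map Y = expMeasure r := by
  have : IsProbabilityMeasure (μ.map Y) := Measure.isProbabilityMeasure_map hY.aemeasurable
  have := isProbabilityMeasure_expMeasure hr
  refine Measure.eq_of_cdf _ _ (StieltjesFunction.ext fun t ↦ ?_)
  rw [cdf_expMeasure_eq hr]
  split_ifs with ht
  · exact cdf_map_eq_of_measure_le hY (one_sub_exp_neg_nonneg (by positivity)) (h t ht)
  · have h0 : cdf (μ.map Y) 0 = 0 :=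
      cdf_map_eq_of_measure_le hY le_rfl (by simpa using h 0 le_rfl)
    exact le_antisymm (h0 ▸ monotone_cdf _ (by linarith)) (cdf_nonneg _ _)

lemma measure_lt_and_mem_of_indepFun {Ω : Type*} [MeasurableSpace Ω] {μ : Measure Ω}
    [IsProbabilityMeasure μ] {X G : Ω → ℝ} (hX : Measurable X) (hG : Measurable G)
    (hindep : IndepFun X G μ) {f : ℝ → ℝ} (hf : Measurable f) {s : Set ℝ}
    (hs : MeasurableSet s) :
    μ {ω | X ω < f (G ω) ∧ G ω ∈ s} = ∫⁻ g in s, μ.map X (Iio (f g)) ∂(μ.map G) := by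
  have : IsProbabilityMeasure (μ.map X) := Measure.isProbabilityMeasure_map hX.aemeasurable
  set S : Set (ℝ × ℝ) := {p | p.2 < f p.1 ∧ p.1 ∈ s}
  have hS : MeasurableSet S :=
    (measurableSet_lt measurable_snd (hf.comp measurable_fst)).inter (measurable_fst hs)
  have hlaw : μ.map (fun ω ↦ (G ω, X ω)) = (μ.map G).prod (μ.map X) :=
    (indepFun_iff_map_prod_eq_prod_map_map hG.aemeasurable hX.aemeasurable).mp hindep.symm
  have hslice : ∀ g, μ.map X (Prod.mk g ⁻¹' S) = s.indicator (fun g ↦ μ.map X (Iio (f g))) g := by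
    intro g
    by_cases hg : g ∈ s
    · simp [S, hg, Iio_def]
    · simp [S, hg]
  calc μ {ω | X ω < f (G ω) ∧ G ω ∈ s} = μ ((fun ω ↦ (G ω, X ω)) ⁻¹' S) := rfl
    _ = ∫⁻ g, s.indicator (fun g ↦ μ.map X (Iio (f g))) g ∂(μ.map G) := by
      rw [← Measure.map_apply (hG.prodMk hX) hS, hlaw, Measure.prod_apply hS]
      simp_rw [hslice]
    _ = _ := lintegral_indicator hs _

lemma setLIntegral_expMeasure_Iio {r b : ℝ} (hr : 0 ≤ r) (hb : 0 ≤ b) {φ : ℝ → ENNReal}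
    {ψ : ℝ → ℝ} (hψ : Continuous ψ) (hψ_nonneg : ∀ g ∈ Ico 0 b, 0 ≤ ψ g)
    (hφ : ∀ g ∈ Ico 0 b, φ g = ENNReal.ofReal (ψ g)) :
    ∫⁻ g in Iio b, φ g ∂(expMeasure r)
      = ENNReal.ofReal (∫ g in 0..b, ψ g * (r * exp (-(r * g)))) := by
  have hdens : ∀ g ∈ Iio b, exponentialPDF r g * φ g
      = (Ici 0).indicator (fun g ↦ ENNReal.ofReal (ψ g * (r * exp (-(r * g))))) g := by
    intro g hg
    rcases lt_or_ge g 0 with hg0 | hg0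
    · simp [exponentialPDF_of_neg hg0, hg0]
    · rw [indicator_of_mem (mem_Ici.2 hg0), exponentialPDF_of_nonneg hg0, hφ g ⟨hg0, hg⟩,
        ← ENNReal.ofReal_mul (by positivity), mul_comm]
  have hmeas : Measurable (exponentialPDF r) := (measurable_gammaPDFReal 1 r).ennreal_ofReal
  rw [expMeasure, gammaMeasure, show gammaPDF 1 r = exponentialPDF r from rfl,
    restrict_withDensity measurableSet_Iio,
    lintegral_withDensity_eq_lintegral_mul_non_measurable _ hmeas
      (ae_of_all _ fun _ ↦ ENNReal.ofReal_lt_top)]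
  simp only [Pi.mul_apply]
  rw [setLIntegral_congr_fun measurableSet_Iio hdens, lintegral_indicator measurableSet_Ici,
    Measure.restrict_restrict measurableSet_Ici, Ici_inter_Iio,
    ← ofReal_integral_eq_lintegral_ofReal, integral_Ico_eq_integral_Ioc,
    intervalIntegral.integral_of_le hb]
  · exact (by fun_prop : Continuous fun g ↦ ψ g * (r * exp (-(r * g)))).integrableOn_Icc.mono_set
      Ico_subset_Icc_self
  · exact (ae_restrict_iff' measurableSet_Ico).2
      (ae_of_all _ fun g hg ↦ mul_nonneg (hψ_nonneg g hg) (by positivity))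

lemma integral_exp_neg_mul (k b : ℝ) (hk : k ≠ 0) :
    ∫ x in (0:ℝ)..b, exp (-(k * x)) = (1 - exp (-(k * b))) / k := by
  simp_rw [← neg_mul]
  rw [intervalIntegral.integral_comp_mul_left (fun x ↦ exp x) (neg_ne_zero.2 hk), integral_exp]
  simp only [inv_neg, neg_mul, mul_zero, exp_zero, smul_eq_mul]
  field_simp
  ring

lemma one_sub_exp_pow_mul_exp_eq_sum (M : ℕ) (a P g : ℝ) :
    (1 - exp (-(a * (P * g + 1)))) ^ M * exp (-g)
      = ∑ i ∈ Finset.range (M + 1),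
          (M.choose i : ℝ) * (-1) ^ i * exp (-(i * a)) * exp (-((1 + i * a * P) * g)) := by
  rw [sub_eq_neg_add, add_pow, Finset.sum_mul]
  refine Finset.sum_congr rfl fun i _ ↦ ?_
  have hexp : exp (-(a * (P * g + 1))) ^ i * exp (-g)
      = exp (-(i * a)) * exp (-((1 + i * a * P) * g)) := by
    rw [← exp_nat_mul, ← exp_add, ← exp_add]
    ring_nf
  rw [neg_pow, one_pow, mul_one]
  linear_combination ((-1 : ℝ) ^ i * M.choose i) * hexp

lemma integral_one_sub_exp_pow_mul_exp (M : ℕ) {a P : ℝ} (ha : 0 ≤ a) (hP : 0 ≤ P) (b : ℝ) :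
    ∫ g in (0:ℝ)..b, (1 - exp (-(a * (P * g + 1)))) ^ M * exp (-g)
      = ∑ i ∈ Finset.range (M + 1),
          (M.choose i : ℝ) * (-1) ^ i * exp (-(i * a)) *
            ((1 - exp (-((1 + i * a * P) * b))) / (1 + i * a * P)) := by
  simp_rw [one_sub_exp_pow_mul_exp_eq_sum]
  rw [intervalIntegral.integral_finsetSum fun i _ ↦
    (by fun_prop : Continuous _).intervalIntegrable _ _]
  refine Finset.sum_congr rfl fun i _ ↦ ?_
  rw [intervalIntegral.integral_const_mul, integral_exp_neg_mul _ _ (by positivity)]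

theorem stmt_10 {Ω : Type*} [MeasureSpace Ω] [IsProbabilityMeasure (ℙ : Measure Ω)]
    (M : ℕ) (X G : Ω → ℝ) (hmX : Measurable X) (hmG : Measurable G)
    (hX : ∀ t : ℝ, 0 ≤ t → ℙ {ω | X ω ≤ t} = ENNReal.ofReal ((1 - Real.exp (-t)) ^ M))
    (hG : ∀ t : ℝ, 0 ≤ t → ℙ {ω | G ω ≤ t} = ENNReal.ofReal (1 - Real.exp (-t)))
    (hindep : IndepFun X G ℙ) (αs P0 α0 : ℝ) (hαs : 0 < αs) (hP0 : 0 < P0) (hα0 : 0 < α0) :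
    ℙ {ω | X ω < αs * (P0 * G ω + 1) ∧ G ω < α0}
      = ENNReal.ofReal (∑ i ∈ Finset.range (M + 1),
          (M.choose i : ℝ) * (-1) ^ i * Real.exp (-(i * αs)) *
            ((1 - Real.exp (-((1 + i * αs * P0) * α0))) / (1 + i * αs * P0))) := by
  have hlawG : Measure.map G ℙ = expMeasure 1 :=
    map_eq_expMeasure_of_measure_le hmG one_pos (by simpa only [one_mul] using hG)
  have hX_Iio : ∀ c, 0 < c → Measure.map X ℙ (Iio c) = ENNReal.ofReal ((1 - exp (-c)) ^ M) :=
    fun c hc ↦ map_measure_Iio_of_measure_le hmX (by fun_prop)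
      (fun t ht ↦ pow_nonneg (one_sub_exp_neg_nonneg ht) _) hX hc
  calc ℙ {ω | X ω < αs * (P0 * G ω + 1) ∧ G ω < α0}
      = ∫⁻ g in Iio α0, Measure.map X ℙ (Iio (αs * (P0 * g + 1))) ∂(Measure.map G ℙ) :=
        measure_lt_and_mem_of_indepFun hmX hmG hindep (f := fun g ↦ αs * (P0 * g + 1))
          (by fun_prop) measurableSet_Iio
    _ = ENNReal.ofReal (∫ g in (0:ℝ)..α0, (1 - exp (-(αs * (P0 * g + 1)))) ^ M * exp (-g)) := by
      rw [hlawG, setLIntegral_expMeasure_Iio zero_le_one hα0.le (by fun_prop) ?_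
        fun g hg ↦ hX_Iio _ (by have := hg.1; positivity)]
      · simp only [one_mul]
      · exact fun g hg ↦ pow_nonneg (one_sub_exp_neg_nonneg (by have := hg.1; positivity)) _
    _ = _ := by rw [integral_one_sub_exp_pow_mul_exp M hαs.le hP0.le]
end

section
/- Let εs > 0 be fixed and for each P > 0 set αs = εs/P and P0 = P. Then the Scheme II outage probability 1 − e^{−αs}/(1 + αs·P0) tends to εs/(1 + εs) > 0 as P → ∞. -/
open Filter Topology

lemma tendsto_exp_neg_div_atTop (c : ℝ) :
    Tendsto (fun P : ℝ => Real.exp (-(c / P))) atTop (𝓝 1) := by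
  have hdiv : Tendsto (fun P : ℝ => -(c / P)) atTop (𝓝 0) := by
    simpa using ((tendsto_const_nhds (x := c)).div_atTop tendsto_id).neg
  simpa [Function.comp_def] using (Real.continuous_exp.tendsto 0).comp hdiv

lemma div_mul_self_eventuallyEq (c : ℝ) :
    (fun P : ℝ => c / P * P) =ᶠ[atTop] fun _ => c := by
  filter_upwards [eventually_ne_atTop 0] with P hP
  exact div_mul_cancel₀ c hP

/-- With `αs = c / P` and `P0 = P`, the product `αs * P0 = c` does not decay, so the outage
probability keeps the floor `1 - 1 / (1 + c)`. -/
lemma tendsto_one_sub_exp_neg_div_div_one_add (c : ℝ) (hc : 1 + c ≠ 0) :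
    Tendsto (fun P : ℝ => 1 - Real.exp (-(c / P)) / (1 + (c / P) * P)) atTop
      (𝓝 (c / (1 + c))) := by
  have hfloor : c / (1 + c) = 1 - 1 / (1 + c) := by field_simp; ring
  rw [hfloor]
  refine tendsto_const_nhds.sub ?_
  refine ((tendsto_exp_neg_div_atTop c).div_const (1 + c)).congr' ?_
  filter_upwards [div_mul_self_eventuallyEq c] with P hP
  rw [hP]

theorem stmt_12 (εs : ℝ) (hεs : 0 < εs) :
    Tendsto (fun P : ℝ => 1 - Real.exp (-(εs / P)) / (1 + (εs / P) * P)) atTop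
        (nhds (εs / (1 + εs))) ∧
      0 < εs / (1 + εs) :=
  ⟨tendsto_one_sub_exp_neg_div_div_one_add εs (by positivity), by positivity⟩
end

section
/- Let X₁ ≤ ... ≤ X_M be the order statistics of M i.i.d. unit-rate exponentials, let G be an independent unit-rate exponential, and let εs, ε0 > 0 with ε0·εs < 1, Ps, P0 > 0. Set τ(x) = max(0, P0·x/ε0 − 1), αs = εs/Ps, and α2 = ε0(εs+1)/((1−ε0εs)P0). Then P(X₁ > τ(G)/Ps and X_M < αs(P0·G + 1)) ≤ P(G < α2) = 1 − e^{−α2}. -/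
open MeasureTheory ProbabilityTheory

theorem stmt_17 {Ω : Type*} [MeasureSpace Ω] [IsProbabilityMeasure (ℙ : Measure Ω)]
    (M : ℕ) (hM : 1 ≤ M) (X : Fin M → Ω → ℝ) (G : Ω → ℝ)
    (hmX : ∀ i, Measurable (X i)) (hmG : Measurable G)
    (hindepX : iIndepFun (m := fun _ => Real.measurableSpace) X ℙ)
    (hindepG : ∀ i, IndepFun (X i) G ℙ)
    (hdistX : ∀ i, ∀ t : ℝ, 0 ≤ t → ℙ {ω | X i ω ≤ t} = ENNReal.ofReal (1 - Real.exp (-t)))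
    (hdistG : ∀ t : ℝ, 0 ≤ t → ℙ {ω | G ω < t} = ENNReal.ofReal (1 - Real.exp (-t)))
    (εs ε0 Ps P0 α2 : ℝ) (hεs : 0 < εs) (hε0 : 0 < ε0) (hprod : ε0 * εs < 1)
    (hPs : 0 < Ps) (hP0 : 0 < P0) (αs : ℝ) (hαs : αs = εs / Ps)
    (hα2 : α2 = ε0 * (εs + 1) / ((1 - ε0 * εs) * P0))
    (τ : ℝ → ℝ) (hτ : ∀ x, τ x = max 0 (P0 * x / ε0 - 1)) :
    ℙ {ω | (⨅ i, X i ω) > τ (G ω) / Ps ∧ (⨆ i, X i ω) < αs * (P0 * G ω + 1)}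
        ≤ ℙ {ω | G ω < α2} ∧
      ℙ {ω | G ω < α2} = ENNReal.ofReal (1 - Real.exp (-α2)) := by
  have hden : 0 < (1 - ε0 * εs) * P0 := mul_pos (by linarith) hP0
  have hα2pos : 0 < α2 := by
    rw [hα2]; exact div_pos (mul_pos hε0 (by linarith)) hden
  constructor
  · apply measure_mono
    rintro ω ⟨h1, h2⟩
    have i0 : Fin M := ⟨0, hM⟩
    have hinf : (⨅ i, X i ω) ≤ X i0 ω := ciInf_le (Set.Finite.bddBelow (Set.finite_range (fun i => X i ω))) i0
    have hsup : X i0 ω ≤ (⨆ i, X i ω) := le_ciSup (Set.Finite.bddAbove (Set.finite_range (fun i => X i ω))) i0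
    have hchain : τ (G ω) / Ps < αs * (P0 * G ω + 1) := by
      exact lt_of_lt_of_le h1 (hinf.trans (hsup.trans h2.le))
    have hτlt : τ (G ω) < εs * (P0 * G ω + 1) := by
      have := (div_lt_iff₀ hPs).mp hchain
      rw [hαs] at this
      calc τ (G ω) < εs / Ps * (P0 * G ω + 1) * Ps := this
        _ = εs * (P0 * G ω + 1) := by field_simp
    have hmaxlt : P0 * G ω / ε0 - 1 < εs * (P0 * G ω + 1) := by
      have := hτ (G ω)
      have h := le_max_right (0:ℝ) (P0 * G ω / ε0 - 1)
      rw [← this] at h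
      linarith
    show G ω < α2
    rw [hα2, lt_div_iff₀ hden]
    have h2' : P0 * G ω / ε0 < εs * (P0 * G ω + 1) + 1 := by linarith
    have h3 : P0 * G ω < ε0 * (εs * (P0 * G ω + 1) + 1) := by
      have := (div_lt_iff₀ hε0).mp h2'
      linarith [this]
    nlinarith [h3]
  · exact hdistG α2 hα2pos.le
end
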